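/- Let G be an abelian group, B a G-graded algebra over a field F whose centroid equals the sum of its homogeneous components, and let H = {g ∈ G : C(B)_g ≠ 0} be the support of the induced grading on the centroid. If B is graded-simple, then H is a subgroup of G and every nonzero homogeneous element of C(B) is invertible (C(B) is a graded-field). -/

import Mathlib

/-!
The kernel and the image of a homogeneous centroid element `c` are graded ideals, so by
graded-simplicity `c ≠ 0` is bijective. Its inverse is again a centroid element, and it is
homogeneous of the inverse degree because `c` commutes with taking homogeneous components.
Hence nonzero homogeneous centroid elements are units, their degrees are closed under
products and inverses, and the support of the centroid grading is a subgroup.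
-/

section

variable {G F M : Type*} [CommGroup G] [Field F] [AddCommGroup M] [Module F M]

/-- `c` belongs to the centroid of the algebra `(M, mul)`. -/
def IsCentroidElem' (mul : M →ₗ[F] M →ₗ[F] M) (c : M →ₗ[F] M) : Prop :=
  ∀ x y : M, c (mul x y) = mul (c x) y ∧ c (mul x y) = mul x (c y)

/-- `c` is homogeneous of degree `h` with respect to the grading `𝒜`. -/
def IsHomogOfDeg' (𝒜 : G → Submodule F M) (h : G) (c : M →ₗ[F] M) : Prop :=
  ∀ g : G, ∀ x ∈ 𝒜 g, c x ∈ 𝒜 (h * g)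

variable {𝒜 : G → Submodule F M} {mul : M →ₗ[F] M →ₗ[F] M}

namespace IsCentroidElem'

theorem id : IsCentroidElem' mul LinearMap.id :=
  fun _ _ => ⟨rfl, rfl⟩

theorem comp {c d : M →ₗ[F] M} (hc : IsCentroidElem' mul c) (hd : IsCentroidElem' mul d) :
    IsCentroidElem' mul (c ∘ₗ d) := fun x y =>
  ⟨by simp only [LinearMap.comp_apply, (hd x y).1, (hc (d x) y).1],
    by simp only [LinearMap.comp_apply, (hd x y).2, (hc x (d y)).2]⟩

theorem symm {e : M ≃ₗ[F] M} (he : IsCentroidElem' mul (e : M →ₗ[F] M)) :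
    IsCentroidElem' mul (e.symm : M →ₗ[F] M) := fun x y => by
  have h₁ := (he (e.symm x) y).1
  have h₂ := (he x (e.symm y)).2
  simp only [LinearEquiv.coe_coe, LinearEquiv.apply_symm_apply] at h₁ h₂ ⊢
  exact ⟨e.symm_apply_eq.mpr h₁.symm, e.symm_apply_eq.mpr h₂.symm⟩

theorem mul_mem_ker {c : M →ₗ[F] M} (hc : IsCentroidElem' mul c) (a : M) {x : M}
    (hx : x ∈ LinearMap.ker c) : mul a x ∈ LinearMap.ker c ∧ mul x a ∈ LinearMap.ker c := by
  simp only [LinearMap.mem_ker] at hx ⊢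
  rw [(hc a x).2, (hc x a).1, hx, map_zero, map_zero, LinearMap.zero_apply]
  exact ⟨rfl, rfl⟩

theorem mul_mem_range {c : M →ₗ[F] M} (hc : IsCentroidElem' mul c) (a : M) {x : M}
    (hx : x ∈ LinearMap.range c) :
    mul a x ∈ LinearMap.range c ∧ mul x a ∈ LinearMap.range c := by
  obtain ⟨y, rfl⟩ := hx
  exact ⟨⟨_, (hc a y).2⟩, ⟨_, (hc y a).1⟩⟩

end IsCentroidElem'

namespace IsHomogOfDeg'

theorem id : IsHomogOfDeg' 𝒜 1 LinearMap.id :=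
  fun _ _ hx => by simpa using hx

theorem comp {c d : M →ₗ[F] M} {g h : G} (hc : IsHomogOfDeg' 𝒜 g c)
    (hd : IsHomogOfDeg' 𝒜 h d) : IsHomogOfDeg' 𝒜 (g * h) (c ∘ₗ d) := fun k x hx => by
  simpa only [LinearMap.comp_apply, mul_assoc] using hc _ _ (hd k x hx)

variable [DecidableEq G] [DirectSum.Decomposition 𝒜]

theorem decompose_apply {c : M →ₗ[F] M} {h : G} (hc : IsHomogOfDeg' 𝒜 h c) (x : M) (g : G) :
    (DirectSum.decompose 𝒜 (c x) (h * g) : M) = c (DirectSum.decompose 𝒜 x g) := by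
  induction x using DirectSum.Decomposition.inductionOn 𝒜 with
  | zero => simp
  | @homogeneous i m =>
    obtain ⟨m, hm⟩ := m
    by_cases hgi : g = i
    · subst hgi
      rw [DirectSum.decompose_of_mem_same 𝒜 hm, DirectSum.decompose_of_mem_same 𝒜 (hc g m hm)]
    · rw [DirectSum.decompose_of_mem_ne 𝒜 hm (Ne.symm hgi),
        DirectSum.decompose_of_mem_ne 𝒜 (hc i m hm) (fun h' => hgi (mul_left_cancel h').symm),
        map_zero]
  | add a b ha hb =>
    simp only [map_add, DirectSum.decompose_add, DirectSum.add_apply, Submodule.coe_add, ha, hb]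

theorem decompose_mem_ker {c : M →ₗ[F] M} {h : G} (hc : IsHomogOfDeg' 𝒜 h c) {x : M}
    (hx : x ∈ LinearMap.ker c) (g : G) : (DirectSum.decompose 𝒜 x g : M) ∈ LinearMap.ker c := by
  rw [LinearMap.mem_ker] at hx ⊢
  rw [← hc.decompose_apply, hx, DirectSum.decompose_zero, DirectSum.zero_apply,
    ZeroMemClass.coe_zero]

theorem decompose_mem_range {c : M →ₗ[F] M} {h : G} (hc : IsHomogOfDeg' 𝒜 h c) {x : M}
    (hx : x ∈ LinearMap.range c) (g : G) :
    (DirectSum.decompose 𝒜 x g : M) ∈ LinearMap.range c := by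
  obtain ⟨y, rfl⟩ := hx
  rw [← mul_inv_cancel_left h g, hc.decompose_apply]
  exact LinearMap.mem_range_self c _

/-- `e.symm x = (e.symm x)_{h⁻¹ k}` for `x ∈ 𝒜 k`, as both sides have image `x` under `e`. -/
theorem symm {e : M ≃ₗ[F] M} {h : G} (he : IsHomogOfDeg' 𝒜 h (e : M →ₗ[F] M)) :
    IsHomogOfDeg' 𝒜 h⁻¹ (e.symm : M →ₗ[F] M) := fun k x hx => by
  have hcomp : e (DirectSum.decompose 𝒜 (e.symm x) (h⁻¹ * k)) = e (e.symm x) := by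
    rw [← LinearEquiv.coe_coe, ← he.decompose_apply, LinearEquiv.coe_coe,
      LinearEquiv.apply_symm_apply, mul_inv_cancel_left, DirectSum.decompose_of_mem_same 𝒜 hx]
  rw [LinearEquiv.coe_coe, ← e.injective hcomp]
  exact SetLike.coe_mem _

end IsHomogOfDeg'

variable [DecidableEq G] (𝒜 mul) [DirectSum.Decomposition 𝒜]

def HasOnlyTrivialGradedIdeals : Prop :=
  ∀ I : Submodule F M,
    (∀ x ∈ I, ∀ g : G, ((DirectSum.decompose 𝒜 x g : 𝒜 g) : M) ∈ I) →
    (∀ a : M, ∀ x ∈ I, mul a x ∈ I ∧ mul x a ∈ I) → I = ⊥ ∨ I = ⊤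

variable {𝒜 mul}

namespace HasOnlyTrivialGradedIdeals

theorem bijective_of_ne_zero (hB : HasOnlyTrivialGradedIdeals 𝒜 mul) {c : M →ₗ[F] M} {g : G}
    (hc : IsCentroidElem' mul c) (hg : IsHomogOfDeg' 𝒜 g c) (hne : c ≠ 0) :
    Function.Bijective c := by
  refine ⟨?injective, ?surjective⟩
  case injective =>
    rw [← LinearMap.ker_eq_bot]
    refine (hB _ (fun x hx => hg.decompose_mem_ker hx) hc.mul_mem_ker).resolve_right ?_
    exact fun htop => hne (LinearMap.ker_eq_top.mp htop)
  case surjective =>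
    rw [← LinearMap.range_eq_top]
    refine (hB _ (fun x hx => hg.decompose_mem_range hx) hc.mul_mem_range).resolve_left ?_
    exact fun hbot => hne (LinearMap.range_eq_bot.mp hbot)

theorem exists_inverse (hB : HasOnlyTrivialGradedIdeals 𝒜 mul) {g : G} {c : M →ₗ[F] M}
    (hc : IsCentroidElem' mul c) (hg : IsHomogOfDeg' 𝒜 g c) (hne : c ≠ 0) :
    ∃ d : M →ₗ[F] M, IsCentroidElem' mul d ∧ IsHomogOfDeg' 𝒜 g⁻¹ d ∧
      d ∘ₗ c = LinearMap.id ∧ c ∘ₗ d = LinearMap.id := by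
  let e := LinearEquiv.ofBijective c (hB.bijective_of_ne_zero hc hg hne)
  exact ⟨e.symm, IsCentroidElem'.symm (e := e) hc, IsHomogOfDeg'.symm (e := e) hg,
    e.symm_comp, e.comp_symm⟩

variable [Nontrivial M]

/-- The support `H` of the grading of the centroid. -/
def centroidSupport (hB : HasOnlyTrivialGradedIdeals 𝒜 mul) : Subgroup G where
  carrier := {g : G | ∃ c : M →ₗ[F] M, IsCentroidElem' mul c ∧ IsHomogOfDeg' 𝒜 g c ∧ c ≠ 0}
  one_mem' := ⟨LinearMap.id, .id, .id, LinearMap.ne_zero_of_injective Function.injective_id⟩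
  mul_mem' := by
    rintro g h ⟨c, hc, hgc, hc0⟩ ⟨d, hd, hhd, hd0⟩
    refine ⟨c ∘ₗ d, hc.comp hd, hgc.comp hhd, LinearMap.ne_zero_of_injective ?_⟩
    exact (hB.bijective_of_ne_zero hc hgc hc0).injective.comp
      (hB.bijective_of_ne_zero hd hhd hd0).injective
  inv_mem' := by
    rintro g ⟨c, hc, hgc, hc0⟩
    obtain ⟨d, hd, hgd, -, hcd⟩ := hB.exists_inverse hc hgc hc0
    exact ⟨d, hd, hgd,
      LinearMap.ne_zero_of_injective (Function.LeftInverse.injective (LinearMap.congr_fun hcd))⟩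

end HasOnlyTrivialGradedIdeals

theorem centroid_of_graded_simple_is_graded_field_general {G F M : Type*} [CommGroup G]
    [DecidableEq G] [Field F] [AddCommGroup M] [Module F M] [Nontrivial M]
    (𝒜 : G → Submodule F M) [DirectSum.Decomposition 𝒜]
    (mul : M →ₗ[F] M →ₗ[F] M)
    -- no proper nonzero graded ideals:
    (hsimple : ∀ I : Submodule F M,
      (∀ x ∈ I, ∀ g : G, ((DirectSum.decompose 𝒜 x g : 𝒜 g) : M) ∈ I) →
      (∀ a : M, ∀ x ∈ I, mul a x ∈ I ∧ mul x a ∈ I) → I = ⊥ ∨ I = ⊤) :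
    (∃ H : Subgroup G, (H : Set G) = {g : G | ∃ c : M →ₗ[F] M,
      IsCentroidElem' mul c ∧ IsHomogOfDeg' 𝒜 g c ∧ c ≠ 0}) ∧
    (∀ (g : G) (c : M →ₗ[F] M), IsCentroidElem' mul c → IsHomogOfDeg' 𝒜 g c → c ≠ 0 →
      ∃ d : M →ₗ[F] M, IsCentroidElem' mul d ∧ IsHomogOfDeg' 𝒜 g⁻¹ d ∧
        d ∘ₗ c = LinearMap.id ∧ c ∘ₗ d = LinearMap.id) :=
  have hB : HasOnlyTrivialGradedIdeals 𝒜 mul := hsimple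
  ⟨⟨hB.centroidSupport, rfl⟩, fun _ _ hc hg hne => hB.exists_inverse hc hg hne⟩

/-- For a graded-simple algebra `B` whose centroid is spanned by its homogeneous
components, the support of the grading on the centroid is a subgroup of `G`, and every
nonzero homogeneous centroid element is invertible (the centroid is a graded-field). -/
theorem centroid_of_graded_simple_is_graded_field {G F M : Type*} [CommGroup G]
    [DecidableEq G] [Field F] [AddCommGroup M] [Module F M] [Nontrivial M]
    (𝒜 : G → Submodule F M) [DirectSum.Decomposition 𝒜]
    (mul : M →ₗ[F] M →ₗ[F] M)
    (hgr : ∀ g₁ g₂ : G, ∀ x ∈ 𝒜 g₁, ∀ y ∈ 𝒜 g₂, mul x y ∈ 𝒜 (g₁ * g₂))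
    -- B² = B :
    (hBB : Submodule.span F {z : M | ∃ x y : M, z = mul x y} = ⊤)
    -- no proper nonzero graded ideals:
    (hsimple : ∀ I : Submodule F M,
      (∀ x ∈ I, ∀ g : G, ((DirectSum.decompose 𝒜 x g : 𝒜 g) : M) ∈ I) →
      (∀ a : M, ∀ x ∈ I, mul a x ∈ I ∧ mul x a ∈ I) → I = ⊥ ∨ I = ⊤)
    -- the centroid is the sum of its homogeneous components:
    (hcspan : ∀ c : M →ₗ[F] M, IsCentroidElem' mul c →
      c ∈ Submodule.span F {c' : M →ₗ[F] M | ∃ h : G,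
        IsCentroidElem' mul c' ∧ IsHomogOfDeg' 𝒜 h c'}) :
    (∃ H : Subgroup G, (H : Set G) = {g : G | ∃ c : M →ₗ[F] M,
      IsCentroidElem' mul c ∧ IsHomogOfDeg' 𝒜 g c ∧ c ≠ 0}) ∧
    (∀ (g : G) (c : M →ₗ[F] M), IsCentroidElem' mul c → IsHomogOfDeg' 𝒜 g c → c ≠ 0 →
      ∃ d : M →ₗ[F] M, IsCentroidElem' mul d ∧ IsHomogOfDeg' 𝒜 g⁻¹ d ∧
        d ∘ₗ c = LinearMap.id ∧ c ∘ₗ d = LinearMap.id) :=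
  centroid_of_graded_simple_is_graded_field_general 𝒜 mul hsimple

end
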